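/- arXiv:1802.03076 — 2 statements merged into one kernel-verified Lean document; each statement's English description precedes it below -/
import Mathlib

section
/- Let A be a unital associative k-algebra free as a k-module on a basis B with φ_α φ_β = μ_{α,β} φ_m where each structure constant μ_{α,β} ∈ k is idempotent (μ² = μ). Then the map Ψ : Hom_k(A^{⊗n}, k) → AP(A^{⊗n}, A), defined by Ψ(α)(φ_1 ⊗ ⋯ ⊗ φ_n) = α(φ_1 ⊗ ⋯ ⊗ φ_n)·(φ_1 φ_2 ⋯ φ_n), satisfies δ ∘ Ψ = Ψ ∘ d^* for all n ≥ 1, i.e., Ψ is a cochain map from the simplicial cochain complex of the bar construction to the autopoietic Hochschild cochains. -/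
variable {k A B : Type} [CommRing k] [Ring A] [Algebra k A]

/-- Hochschild cochains `Hom_k(A^{⊗n}, A)` for `A` free on the basis `B`, modeled by
their values on tuples of basis elements. -/
abbrev ACochain (A B : Type) (n : ℕ) : Type := (Fin n → B) → A

/-- Simplicial cochains `Hom_k(A^{⊗n}, k)`, modeled by values on tuples of basis
elements. -/
abbrev SCochain (k B : Type) (n : ℕ) : Type := (Fin n → B) → k

/-- The ordered product `φ_1 φ_2 ⋯ φ_n ∈ A` of a tuple of basis elements. -/
noncomputable def aprod (bas : Module.Basis B k A) {n : ℕ} (φ : Fin n → B) : A :=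
  (List.ofFn fun i => bas (φ i)).prod

/-- A cochain is (strictly) autopoietic if
`f(φ_1 ⊗ ⋯ ⊗ φ_n) = λ_{φ_1,…,φ_n} · (φ_1 φ_2 ⋯ φ_n)` for all basis elements `φ_i`. -/
def IsAP (bas : Module.Basis B k A) {n : ℕ} (f : ACochain A B n) : Prop :=
  ∀ φ : Fin n → B, ∃ c : k, f φ = c • aprod bas φ

/-- Merge the `i`-th and `(i+1)`-st entries of a tuple of basis elements using the
basis-level product `m`. -/
def bmerge (m : B → B → B) {n : ℕ} (φ : Fin (n + 1) → B) (i : Fin n) : Fin n → B := fun j =>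
  if (j : ℕ) < i then φ j.castSucc
  else if (j : ℕ) = i then m (φ j.castSucc) (φ j.succ)
  else φ j.succ

/-- The Hochschild coboundary, expressed via the structure constants
`φ_α φ_β = μ_{α,β} φ_{m(α,β)}`. -/
noncomputable def adelta (bas : Module.Basis B k A) (μ : B → B → k) (m : B → B → B) (n : ℕ) :
    ACochain A B n →ₗ[k] ACochain A B (n + 1) :=
  (LinearMap.pi fun φ =>
      (LinearMap.mulLeft k (bas (φ 0))).comp (LinearMap.proj (Fin.tail φ)))
  + (∑ i : Fin n, LinearMap.pi fun φ =>
      (((-1 : k) ^ ((i : ℕ) + 1)) * μ (φ i.castSucc) (φ i.succ)) •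
        (LinearMap.proj (bmerge m φ i) : ACochain A B n →ₗ[k] A))
  + ((-1 : k) ^ (n + 1)) •
      LinearMap.pi fun φ =>
        (LinearMap.mulRight k (bas (φ (Fin.last n)))).comp (LinearMap.proj (Fin.init φ))

/-- `Ψ(α)(φ_1 ⊗ ⋯ ⊗ φ_n) = α(φ_1 ⊗ ⋯ ⊗ φ_n)·(φ_1 φ_2 ⋯ φ_n)`. -/
noncomputable def PsiA (bas : Module.Basis B k A) {n : ℕ} (α : SCochain k B n) : ACochain A B n :=
  fun φ => α φ • aprod bas φ

/-- The `i`-th face of the bar construction on basis tuples (`d_0` drops the first entry,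
`d_i` multiplies adjacent entries via `m`, the last face drops the last entry). -/
def barFaceB (m : B → B → B) {n : ℕ} (i : ℕ) (φ : Fin (n + 1) → B) : Fin n → B := fun j =>
  if (j : ℕ) + 1 < i then φ j.castSucc
  else if (j : ℕ) + 1 = i then m (φ j.castSucc) (φ j.succ)
  else φ j.succ

/-- The structure-constant coefficient produced by the `i`-th bar face. -/
def barCoef (μ : B → B → k) {n : ℕ} (i : ℕ) (φ : Fin (n + 1) → B) : k :=
  if h : 1 ≤ i ∧ i ≤ n then
    μ (φ ⟨i - 1, by omega⟩) (φ ⟨i, by omega⟩)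
  else 1

/-- The simplicial coboundary `d^*`, the `Hom_k(-,k)`-dual of the bar differential
`d = Σ (-1)^i d_i`. -/
noncomputable def dstarA (μ : B → B → k) (m : B → B → B) (n : ℕ) :
    SCochain k B n →ₗ[k] SCochain k B (n + 1) :=
  ∑ i ∈ Finset.range (n + 2), LinearMap.pi fun φ =>
    (((-1 : k) ^ i) * barCoef μ i φ) •
      (LinearMap.proj (barFaceB m i φ) : SCochain k B n →ₗ[k] k)

section Product

variable (bas : Module.Basis B k A)

lemma aprod_succ {n : ℕ} (φ : Fin (n + 1) → B) :
    aprod bas φ = bas (φ 0) * aprod bas (Fin.tail φ) := by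
  simp [aprod, List.ofFn_succ, Fin.tail]

lemma aprod_eq_aprod_init_mul {n : ℕ} (φ : Fin (n + 1) → B) :
    aprod bas φ = aprod bas (Fin.init φ) * bas (φ (Fin.last n)) := by
  simp only [aprod, List.ofFn_succ', List.concat_eq_append, List.prod_append,
    List.prod_cons, List.prod_nil, mul_one]
  rfl

lemma tail_bmerge_succ (m : B → B → B) {n : ℕ} (φ : Fin (n + 2) → B) (i : Fin n) :
    Fin.tail (bmerge m φ i.succ) = bmerge m (Fin.tail φ) i := by
  funext j
  simp only [Fin.tail, bmerge, Fin.val_succ, Nat.add_lt_add_iff_right,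
    Nat.add_right_cancel_iff, ← Fin.succ_castSucc]

lemma tail_bmerge_zero (m : B → B → B) {n : ℕ} (φ : Fin (n + 2) → B) :
    Fin.tail (bmerge m φ 0) = Fin.tail (Fin.tail φ) := by
  funext j
  simp [Fin.tail, bmerge]

variable {bas} {μ : B → B → k} {m : B → B → B}

lemma aprod_eq_smul_aprod_bmerge (hmul : ∀ a b : B, bas a * bas b = μ a b • bas (m a b)) :
    ∀ {n : ℕ} (φ : Fin (n + 1) → B) (i : Fin n),
      aprod bas φ = μ (φ i.castSucc) (φ i.succ) • aprod bas (bmerge m φ i)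
  | 0, _, i => i.elim0
  | n + 1, φ, i => by
    induction i using Fin.cases with
    | zero =>
      rw [aprod_succ, aprod_succ bas (Fin.tail φ), ← mul_assoc, hmul,
        aprod_succ bas (bmerge m φ 0), tail_bmerge_zero, smul_mul_assoc]
      simp [bmerge, Fin.tail]
    | succ i =>
      rw [aprod_succ, aprod_eq_smul_aprod_bmerge hmul (Fin.tail φ) i,
        aprod_succ bas (bmerge m φ i.succ), tail_bmerge_succ, mul_smul_comm]
      simp only [Fin.tail, Fin.succ_castSucc]
      simp [bmerge]

lemma structConst_smul_aprod (hmul : ∀ a b : B, bas a * bas b = μ a b • bas (m a b))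
    (hidem : ∀ a b : B, μ a b * μ a b = μ a b) {n : ℕ} (φ : Fin (n + 1) → B) (i : Fin n) :
    μ (φ i.castSucc) (φ i.succ) • aprod bas φ = aprod bas φ := by
  rw [aprod_eq_smul_aprod_bmerge hmul φ i, smul_smul, hidem]

end Product

section Faces

variable {μ : B → B → k} {m : B → B → B}

lemma barFaceB_zero {n : ℕ} (φ : Fin (n + 1) → B) : barFaceB m 0 φ = Fin.tail φ := by
  funext j
  simp [barFaceB, Fin.tail]

lemma barFaceB_last {n : ℕ} (φ : Fin (n + 1) → B) : barFaceB m (n + 1) φ = Fin.init φ := by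
  funext j
  simp only [barFaceB, Fin.init]
  rw [if_pos (by omega)]

lemma barFaceB_succ {n : ℕ} (φ : Fin (n + 1) → B) (i : Fin n) :
    barFaceB m ((i : ℕ) + 1) φ = bmerge m φ i := by
  funext j
  simp only [barFaceB, bmerge, Nat.add_lt_add_iff_right, Nat.add_right_cancel_iff]

lemma barCoef_zero {n : ℕ} (φ : Fin (n + 1) → B) : barCoef μ 0 φ = 1 := by
  simp [barCoef]

lemma barCoef_last {n : ℕ} (φ : Fin (n + 1) → B) : barCoef μ (n + 1) φ = 1 := by
  rw [barCoef, dif_neg (by omega)]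

lemma barCoef_succ {n : ℕ} (φ : Fin (n + 1) → B) (i : Fin n) :
    barCoef μ ((i : ℕ) + 1) φ = μ (φ i.castSucc) (φ i.succ) := by
  rw [barCoef, dif_pos ⟨by omega, by omega⟩]
  rfl

lemma dstarA_apply {n : ℕ} (α : SCochain k B n) (φ : Fin (n + 1) → B) :
    dstarA μ m n α φ = α (Fin.tail φ)
      + ∑ i : Fin n, (-1 : k) ^ ((i : ℕ) + 1) * μ (φ i.castSucc) (φ i.succ) * α (bmerge m φ i)
      + (-1 : k) ^ (n + 1) * α (Fin.init φ) := by
  simp only [dstarA, LinearMap.sum_apply, Finset.sum_apply, LinearMap.pi_apply,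
    LinearMap.smul_apply, LinearMap.proj_apply, smul_eq_mul]
  rw [Finset.sum_range_succ, Finset.sum_range_succ',
    ← Fin.sum_univ_eq_sum_range (fun i => (-1 : k) ^ (i + 1) * barCoef μ (i + 1) φ *
      α (barFaceB m (i + 1) φ))]
  simp only [barCoef_zero, barFaceB_zero, barCoef_last, barFaceB_last, barCoef_succ,
    barFaceB_succ]
  ring

end Faces

lemma adelta_apply (bas : Module.Basis B k A) (μ : B → B → k) (m : B → B → B) {n : ℕ}
    (f : ACochain A B n) (φ : Fin (n + 1) → B) :
    adelta bas μ m n f φ = bas (φ 0) * f (Fin.tail φ)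
      + ∑ i : Fin n, ((-1 : k) ^ ((i : ℕ) + 1) * μ (φ i.castSucc) (φ i.succ)) • f (bmerge m φ i)
      + (-1 : k) ^ (n + 1) • (f (Fin.init φ) * bas (φ (Fin.last n))) := by
  simp [adelta]

lemma isAP_psiA (bas : Module.Basis B k A) {n : ℕ} (α : SCochain k B n) :
    IsAP bas (PsiA bas α) :=
  fun φ => ⟨α φ, rfl⟩

/-- Each face of `δ(Ψ α)` is a multiple of the full product `φ_0 ⋯ φ_n`; the coefficients
agree with those of `d^* α` because `μ² = μ` absorbs the extra structure constant. -/
theorem adelta_psiA (bas : Module.Basis B k A) (μ : B → B → k) (m : B → B → B)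
    (hmul : ∀ a b : B, bas a * bas b = μ a b • bas (m a b))
    (hidem : ∀ a b : B, μ a b * μ a b = μ a b) (n : ℕ) (α : SCochain k B n) :
    adelta bas μ m n (PsiA bas α) = PsiA bas (dstarA μ m n α) := by
  funext φ
  rw [adelta_apply, show PsiA bas (dstarA μ m n α) φ = dstarA μ m n α φ • aprod bas φ from rfl,
    dstarA_apply, add_smul, add_smul, Finset.sum_smul]
  have first : bas (φ 0) * PsiA bas α (Fin.tail φ) = α (Fin.tail φ) • aprod bas φ := by
    rw [PsiA, mul_smul_comm, ← aprod_succ]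
  have last : (-1 : k) ^ (n + 1) • (PsiA bas α (Fin.init φ) * bas (φ (Fin.last n)))
      = ((-1 : k) ^ (n + 1) * α (Fin.init φ)) • aprod bas φ := by
    rw [PsiA, smul_mul_assoc, ← aprod_eq_aprod_init_mul, smul_smul]
  have middle (i : Fin n) :
      ((-1 : k) ^ ((i : ℕ) + 1) * μ (φ i.castSucc) (φ i.succ)) • PsiA bas α (bmerge m φ i)
        = ((-1 : k) ^ ((i : ℕ) + 1) * μ (φ i.castSucc) (φ i.succ) * α (bmerge m φ i))
            • aprod bas φ := by
    calc _ = ((-1 : k) ^ ((i : ℕ) + 1) * α (bmerge m φ i))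
          • (μ (φ i.castSucc) (φ i.succ) • aprod bas (bmerge m φ i)) := by
          rw [PsiA, smul_smul, smul_smul, mul_right_comm, mul_assoc]
      _ = ((-1 : k) ^ ((i : ℕ) + 1) * α (bmerge m φ i))
          • (μ (φ i.castSucc) (φ i.succ) • aprod bas φ) := by
          rw [← aprod_eq_smul_aprod_bmerge hmul, structConst_smul_aprod hmul hidem]
      _ = _ := by rw [smul_smul, mul_right_comm]
  rw [first, last, Finset.sum_congr rfl fun i _ => middle i]

/-- When the structure constants `μ_{α,β}` are idempotent, the map `Ψ`
is a cochain map from the simplicial cochain complex of the bar construction to the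
autopoietic Hochschild cochains: `δ ∘ Ψ = Ψ ∘ d^*` in all degrees `n ≥ 1`
(moreover `Ψ(α)` is always autopoietic). -/
theorem stmt_10 (bas : Module.Basis B k A) (μ : B → B → k) (m : B → B → B)
    (hmul : ∀ a b : B, bas a * bas b = μ a b • bas (m a b))
    (hidem : ∀ a b : B, μ a b * μ a b = μ a b) :
    (∀ (n : ℕ) (α : SCochain k B n), IsAP bas (PsiA bas α)) ∧
    (∀ (n : ℕ) (α : SCochain k B (n + 1)),
      adelta bas μ m (n + 1) (PsiA bas α) = PsiA bas (dstarA μ m (n + 1) α)) :=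
  ⟨fun _ => isAP_psiA bas, fun n => adelta_psiA bas μ m hmul hidem (n + 1)⟩
end

section
/- Let A be a unital associative k-algebra free on a basis B with products of basis elements being scalar multiples of basis elements, scalars idempotent in k. Then Ψ : Hom_k(A^{⊗*}, k) → AP(A^{⊗*}, A) is multiplicative: Ψ(α ⋅_S β) = Ψ(α) ⋅_G Ψ(β), where ⋅_S is the simplicial cup product and ⋅_G the Gerstenhaber product. -/
variable {k A B : Type} [CommRing k] [Ring A] [Algebra k A]

/-- The Gerstenhaber cup product
`(f ⋅_G g)(a_1 ⊗ ⋯ ⊗ a_{p+q}) = f(a_1 ⊗ ⋯ ⊗ a_p) · g(a_{p+1} ⊗ ⋯ ⊗ a_{p+q})`. -/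
def gcup {p q : ℕ} (f : ACochain A B p) (g : ACochain A B q) : ACochain A B (p + q) :=
  fun φ => f (fun i => φ (Fin.castAdd q i)) * g (fun i => φ (Fin.natAdd p i))

/-- The simplicial cup product
`(α ⋅_S β)(σ) = α(front p-face of σ) · β(back q-face of σ)`. -/
def scup {p q : ℕ} (α : SCochain k B p) (β : SCochain k B q) : SCochain k B (p + q) :=
  fun φ => α (fun i => φ (Fin.castAdd q i)) * β (fun i => φ (Fin.natAdd p i))

theorem aprod_castAdd_mul_natAdd (bas : Module.Basis B k A) {p q : ℕ} (φ : Fin (p + q) → B) :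
    aprod bas φ =
      aprod bas (fun i => φ (Fin.castAdd q i)) * aprod bas (fun i => φ (Fin.natAdd p i)) := by
  rw [aprod, List.ofFn_add, List.prod_append]
  rfl

theorem stmt_11_general (bas : Module.Basis B k A) :
    ∀ (p q : ℕ) (α : SCochain k B p) (β : SCochain k B q),
      PsiA bas (scup α β) = gcup (PsiA bas α) (PsiA bas β) := by
  intro p q α β
  funext φ
  rw [PsiA, scup, aprod_castAdd_mul_natAdd, ← smul_mul_smul_comm]
  rfl

/-- `Ψ` is multiplicative: it carries the simplicial cup product to the
Gerstenhaber product, `Ψ(α ⋅_S β) = Ψ(α) ⋅_G Ψ(β)`. -/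
theorem stmt_11 (bas : Module.Basis B k A) (μ : B → B → k) (m : B → B → B)
    (hmul : ∀ a b : B, bas a * bas b = μ a b • bas (m a b))
    (hidem : ∀ a b : B, μ a b * μ a b = μ a b) :
    ∀ (p q : ℕ) (α : SCochain k B p) (β : SCochain k B q),
      PsiA bas (scup α β) = gcup (PsiA bas α) (PsiA bas β) :=
  stmt_11_general bas
end
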